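/- arXiv:1303.2495 — 3 statements merged into one kernel-verified Lean document; each statement's English description precedes it below -/
import Mathlib

section
/- Let ρ : ℝ^d → ℝ be measurable with |ρ(t)| ≤ 1 for all t and ∫_{ℝ^d} |ρ(t)| dt < ∞. Then for every real u the series Σ_{n=1}^∞ (φ(u)² H_{n−1}(u)² / n!) ∫_{ℝ^d} |ρ(t)|^n dt converges (is finite). -/
/-!
Differentiating `e^{-t²/2} = E[e^{itZ}]`, `Z ~ N(0,1)`, `n` times gives
`e^{-u²/2} |H_n(u)| ≤ E|Z|^n =: m_n`. The absolute moments satisfy `m_{n+2} = (n+1) m_n`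
and are log-convex (both from `m_n = 2^{n/2} Γ((n+1)/2) / √π`), so
`m_n m_{n+1} = n! m_0 m_1` and `√n m_n ≤ m_{n+1}`, whence `m_n² / (n+1)! = O(n^{-3/2})`.
Since `|ρ| ≤ 1`, `∫ |ρ|^{n+1} ≤ ∫ |ρ|`, and the series is dominated by a convergent one.
-/

open MeasureTheory

/-- The standard Gaussian density `φ(u) = (2π)^{-1/2} e^{-u²/2}`. -/
noncomputable def gaussDensity (u : ℝ) : ℝ := Real.exp (-u ^ 2 / 2) / Real.sqrt (2 * Real.pi)

/-- Evaluation of the probabilists' Hermite polynomial `H_n` at a real point. -/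
noncomputable def hermiteEval (n : ℕ) (x : ℝ) : ℝ := Polynomial.aeval x (Polynomial.hermite n)

open ProbabilityTheory Real Nat

lemma iteratedDeriv_ofReal_comp {f : ℝ → ℝ} (hf : ContDiff ℝ ⊤ f) (n : ℕ) :
    iteratedDeriv n (fun t => (f t : ℂ)) = fun t => ((iteratedDeriv n f t : ℝ) : ℂ) := by
  induction n with
  | zero => simp
  | succ n ih =>
    funext t
    rw [iteratedDeriv_succ, ih, iteratedDeriv_succ]
    exact ((hf.differentiable_iteratedDeriv n (by simp) t).hasDerivAt.ofReal_comp).deriv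

lemma norm_iteratedDeriv_charFun_le {μ : Measure ℝ} [IsFiniteMeasure μ] {n : ℕ}
    (hμ : MemLp id n μ) (t : ℝ) :
    ‖iteratedDeriv n (charFun μ) t‖ ≤ ∫ x, |x| ^ n ∂μ := by
  rw [iteratedDeriv_charFun hμ, norm_mul, norm_pow, Complex.norm_I, one_pow, one_mul]
  refine (norm_integral_le_integral_norm _).trans_eq (integral_congr_ae ?_)
  filter_upwards with x
  rw [norm_mul, ← Complex.ofReal_mul, Complex.norm_exp_ofReal_mul_I, mul_one, norm_pow,
    Complex.norm_real, Real.norm_eq_abs]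

lemma charFun_gaussianReal_zero_one :
    charFun (gaussianReal 0 1) = fun t => (Real.exp (-(t ^ 2 / 2)) : ℂ) := by
  funext t
  rw [charFun_gaussianReal]
  push_cast
  ring_nf

lemma exp_mul_abs_hermite_le_integral_abs_pow (n : ℕ) (u : ℝ) :
    Real.exp (-(u ^ 2 / 2)) * |Polynomial.aeval u (Polynomial.hermite n)|
      ≤ ∫ x, |x| ^ n ∂gaussianReal 0 1 := by
  have hderiv := Polynomial.deriv_gaussian_eq_hermite_mul_gaussian n u
  rw [← iteratedDeriv_eq_iterate] at hderiv
  calc Real.exp (-(u ^ 2 / 2)) * |Polynomial.aeval u (Polynomial.hermite n)|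
      = ‖iteratedDeriv n (charFun (gaussianReal 0 1)) u‖ := by
        rw [charFun_gaussianReal_zero_one, iteratedDeriv_ofReal_comp (by fun_prop)]
        beta_reduce
        rw [hderiv, Complex.norm_real, Real.norm_eq_abs, abs_mul, abs_mul, abs_pow, abs_neg,
          abs_one, one_pow, one_mul, abs_of_pos (Real.exp_pos _), mul_comm]
    _ ≤ _ := norm_iteratedDeriv_charFun_le (memLp_id_gaussianReal n) u

lemma half_rpow_neg_half_succ (n : ℕ) : (1 / 2 : ℝ) ^ (-((n : ℝ) + 1) / 2) = √2 ^ (n + 1) := by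
  rw [one_div, inv_rpow zero_le_two, ← rpow_neg zero_le_two, neg_div, neg_neg, sqrt_eq_rpow,
    ← rpow_natCast, ← rpow_mul zero_le_two]
  push_cast
  ring_nf

lemma integral_abs_pow_gaussianReal (n : ℕ) :
    ∫ x, |x| ^ n ∂gaussianReal 0 1 = √2 ^ n * Gamma ((n + 1) / 2) / √π := by
  have hpdf : ∀ x : ℝ, gaussianPDFReal 0 1 x • |x| ^ n
      = (√(2 * π))⁻¹ * (|x| ^ n * Real.exp (-(1 / 2) * |x| ^ 2)) := by
    intro x
    rw [gaussianPDFReal, smul_eq_mul, sq_abs]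
    push_cast
    ring_nf
  have hIoi : ∫ y in Set.Ioi 0, y ^ n * Real.exp (-(1 / 2) * y ^ 2)
      = (1 / 2 : ℝ) ^ (-((n : ℝ) + 1) / 2) * (1 / 2) * Gamma ((n + 1) / 2) := by
    rw [← integral_rpow_mul_exp_neg_mul_rpow two_pos (by linarith [n.cast_nonneg (α := ℝ)])
      one_half_pos]
    refine setIntegral_congr_fun measurableSet_Ioi fun y _ => ?_
    simp only [rpow_natCast, rpow_two]
  rw [integral_gaussianReal_eq_integral_smul one_ne_zero, integral_congr_ae (ae_of_all _ hpdf),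
    integral_const_mul, integral_comp_abs (f := fun y => y ^ n * Real.exp (-(1 / 2) * y ^ 2)),
    hIoi, half_rpow_neg_half_succ, sqrt_mul zero_le_two, pow_succ]
  field_simp

lemma sq_Gamma_add_half_le {s : ℝ} (hs : 0 < s) :
    Gamma (s + 1 / 2) ^ 2 ≤ Gamma s * Gamma (s + 1) := by
  have h := Gamma_mul_add_mul_le_rpow_Gamma_mul_rpow_Gamma hs (by linarith : 0 < s + 1)
    one_half_pos one_half_pos (by norm_num)
  rw [show 1 / 2 * s + 1 / 2 * (s + 1) = s + 1 / 2 by ring, ← sqrt_eq_rpow, ← sqrt_eq_rpow,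
    ← sqrt_mul (Gamma_pos_of_pos hs).le] at h
  calc Gamma (s + 1 / 2) ^ 2 ≤ √(Gamma s * Gamma (s + 1)) ^ 2 :=
        pow_le_pow_left₀ (Gamma_pos_of_pos (by linarith)).le h 2
    _ = Gamma s * Gamma (s + 1) :=
        sq_sqrt (mul_pos (Gamma_pos_of_pos hs) (Gamma_pos_of_pos (by linarith))).le

noncomputable def gaussianAbsMoment (n : ℕ) : ℝ := ∫ x, |x| ^ n ∂gaussianReal 0 1

lemma gaussianAbsMoment_pos (n : ℕ) : 0 < gaussianAbsMoment n := by
  rw [gaussianAbsMoment, integral_abs_pow_gaussianReal]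
  have := Gamma_pos_of_pos (by positivity : (0 : ℝ) < (n + 1) / 2)
  positivity

lemma gaussianAbsMoment_add_two (n : ℕ) :
    gaussianAbsMoment (n + 2) = (n + 1) * gaussianAbsMoment n := by
  simp only [gaussianAbsMoment, integral_abs_pow_gaussianReal]
  rw [show ((n + 2 : ℕ) + 1 : ℝ) / 2 = (n + 1) / 2 + 1 by push_cast; ring,
    Gamma_add_one (by positivity), pow_add, sq_sqrt zero_le_two]
  ring

lemma sq_gaussianAbsMoment_succ_le (n : ℕ) :
    gaussianAbsMoment (n + 1) ^ 2 ≤ gaussianAbsMoment n * gaussianAbsMoment (n + 2) := by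
  simp only [gaussianAbsMoment, integral_abs_pow_gaussianReal]
  have h := sq_Gamma_add_half_le (by positivity : (0 : ℝ) < (n + 1) / 2)
  rw [show ((n : ℝ) + 1) / 2 + 1 / 2 = ((n + 1 : ℕ) + 1 : ℝ) / 2 by push_cast; ring,
    show ((n : ℝ) + 1) / 2 + 1 = ((n + 2 : ℕ) + 1 : ℝ) / 2 by push_cast; ring] at h
  have hc : 0 ≤ √2 ^ (2 * n + 2) / π := by positivity
  calc _ = √2 ^ (2 * n + 2) / π * Gamma (((n + 1 : ℕ) + 1 : ℝ) / 2) ^ 2 := by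
        rw [div_pow, mul_pow, sq_sqrt pi_pos.le, ← pow_mul]
        ring_nf
    _ ≤ √2 ^ (2 * n + 2) / π * (Gamma ((n + 1) / 2) * Gamma (((n + 2 : ℕ) + 1 : ℝ) / 2)) :=
        mul_le_mul_of_nonneg_left h hc
    _ = _ := by
        field_simp
        rw [sq_sqrt pi_pos.le]
        ring

section LogConvexMoments

variable {a : ℕ → ℝ}

lemma mul_succ_eq_factorial_mul (hrec : ∀ n, a (n + 2) = (n + 1) * a n) (n : ℕ) :
    a n * a (n + 1) = n ! * (a 0 * a 1) := by
  induction n with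
  | zero => simp
  | succ n ih =>
    rw [hrec, factorial_succ, cast_mul, mul_assoc, ← ih]
    push_cast
    ring

lemma sq_succ_mul_sqrt_le (hpos : ∀ n, 0 < a n) (hrec : ∀ n, a (n + 2) = (n + 1) * a n)
    (hconv : ∀ n, a (n + 1) ^ 2 ≤ a n * a (n + 2)) (n : ℕ) :
    a (n + 1) ^ 2 * √(n + 1) ≤ (n + 1)! * (a 0 * a 1) := by
  have hratio : √(n + 1) * a (n + 1) ≤ a (n + 2) := by
    refine (pow_le_pow_iff_left₀ (mul_nonneg (sqrt_nonneg _) (hpos _).le) (hpos _).le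
      two_ne_zero).mp ?_
    calc (√(n + 1) * a (n + 1)) ^ 2 = (n + 1) * a (n + 1) ^ 2 := by
          rw [mul_pow, sq_sqrt (by positivity)]
      _ ≤ (n + 1) * (a n * a (n + 2)) := by gcongr; exact hconv n
      _ = a (n + 2) ^ 2 := by rw [hrec]; ring
  calc a (n + 1) ^ 2 * √(n + 1) = a (n + 1) * (√(n + 1) * a (n + 1)) := by ring
    _ ≤ a (n + 1) * a (n + 2) := mul_le_mul_of_nonneg_left hratio (hpos _).le
    _ = (n + 1)! * (a 0 * a 1) := mul_succ_eq_factorial_mul hrec (n + 1)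

lemma summable_sq_div_factorial_succ (hpos : ∀ n, 0 < a n)
    (hrec : ∀ n, a (n + 2) = (n + 1) * a n) (hconv : ∀ n, a (n + 1) ^ 2 ≤ a n * a (n + 2)) :
    Summable fun n => a n ^ 2 / (n + 1)! := by
  have hp : Summable fun n : ℕ => a 0 * a 1 / ((n + 1) * √(n + 1)) := by
    refine (((summable_nat_add_iff 1).mpr (summable_nat_rpow_inv.mpr
      (by norm_num : (1 : ℝ) < 3 / 2))).mul_left (a 0 * a 1)).congr fun n => ?_
    rw [cast_add, cast_one, show (3 / 2 : ℝ) = 1 + 1 / 2 by norm_num,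
      rpow_add (by positivity), rpow_one, ← sqrt_eq_rpow, div_eq_mul_inv]
  refine (summable_nat_add_iff 1).mp <| hp.of_nonneg_of_le (fun n => by positivity) fun n => ?_
  rw [div_le_div_iff₀ (by positivity) (by positivity), factorial_succ (n + 1)]
  push_cast
  calc a (n + 1) ^ 2 * ((n + 1) * √(n + 1)) = (n + 1) * (a (n + 1) ^ 2 * √(n + 1)) := by ring
    _ ≤ (n + 1) * ((n + 1)! * (a 0 * a 1)) :=
        mul_le_mul_of_nonneg_left (sq_succ_mul_sqrt_le hpos hrec hconv n) (by positivity)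
    _ ≤ (n + 1 + 1) * ((n + 1)! * (a 0 * a 1)) := by
        have := mul_pos (hpos 0) (hpos 1)
        gcongr
        linarith
    _ = a 0 * a 1 * ((n + 1 + 1) * (n + 1)!) := by ring

end LogConvexMoments

lemma gaussDensity_mul_abs_hermiteEval_le (n : ℕ) (u : ℝ) :
    gaussDensity u * |hermiteEval n u| ≤ gaussianAbsMoment n := by
  have h2π : 1 ≤ √(2 * π) := one_le_sqrt.mpr (by linarith [pi_gt_three])
  calc gaussDensity u * |hermiteEval n u|
      = Real.exp (-(u ^ 2 / 2)) * |Polynomial.aeval u (Polynomial.hermite n)| / √(2 * π) := by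
        rw [gaussDensity, hermiteEval, neg_div]
        ring
    _ ≤ Real.exp (-(u ^ 2 / 2)) * |Polynomial.aeval u (Polynomial.hermite n)| :=
        div_le_self (by positivity) h2π
    _ ≤ gaussianAbsMoment n := exp_mul_abs_hermite_le_integral_abs_pow n u

theorem sigma_series_summable_general
    {d : ℕ} (ρ : (Fin d → ℝ) → ℝ)
    (hρle : ∀ t, |ρ t| ≤ 1)
    (hρint : Integrable ρ)
    (u : ℝ) :
    Summable fun n : ℕ => gaussDensity u ^ 2 * hermiteEval n u ^ 2 / (n + 1).factorial
      * ∫ t : Fin d → ℝ, |ρ t| ^ (n + 1) := by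
  have hmoments := summable_sq_div_factorial_succ gaussianAbsMoment_pos
    gaussianAbsMoment_add_two sq_gaussianAbsMoment_succ_le
  have hpow_nonneg (n : ℕ) : 0 ≤ ∫ t, |ρ t| ^ (n + 1) := integral_nonneg fun t => by positivity
  have hpow_le (n : ℕ) : ∫ t, |ρ t| ^ (n + 1) ≤ ∫ t, |ρ t| :=
    integral_mono_of_nonneg (ae_of_all _ fun t => by positivity) hρint.abs
      (ae_of_all _ fun t => pow_le_of_le_one (abs_nonneg _) (hρle t) (succ_ne_zero n))
  have hhermite (n : ℕ) : gaussDensity u ^ 2 * hermiteEval n u ^ 2 ≤ gaussianAbsMoment n ^ 2 := by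
    rw [← sq_abs (hermiteEval n u), ← mul_pow]
    exact pow_le_pow_left₀ (by unfold gaussDensity; positivity)
      (gaussDensity_mul_abs_hermiteEval_le n u) 2
  refine (hmoments.mul_right (∫ t, |ρ t|)).of_nonneg_of_le
    (fun n => mul_nonneg (by positivity) (hpow_nonneg n)) fun n => ?_
  exact mul_le_mul (div_le_div_of_nonneg_right (hhermite n) (by positivity)) (hpow_le n)
    (hpow_nonneg n) (by positivity)

theorem sigma_series_summable
    {d : ℕ} (ρ : (Fin d → ℝ) → ℝ)
    (hρmeas : Measurable ρ)
    (hρle : ∀ t, |ρ t| ≤ 1)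
    (hρint : Integrable ρ)
    (u : ℝ) :
    Summable fun n : ℕ => gaussDensity u ^ 2 * hermiteEval n u ^ 2 / (n + 1).factorial
      * ∫ t : Fin d → ℝ, |ρ t| ^ (n + 1) :=
  sigma_series_summable_general ρ hρle hρint u
end

section
/- There exists a constant K > 0 such that for all real u and all natural numbers n, φ(u) |H_n(u)| / √(n!) < K, where φ(u) = (2π)^{−1/2} e^{−u²/2}. -/
/-!
By the Rodrigues-type formula `(d/du)ⁿ e^{-u²/2} = (-1)ⁿ Hₙ(u) e^{-u²/2}`, the quantity
`φ(u) |Hₙ(u)|` is `(2π)^{-1/2}` times the `n`-th derivative of `e^{-u²/2}`. That Gaussian is the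
Fourier transform of `√(2π) e^{-2π²ξ²}`, so its `n`-th derivative is bounded uniformly by the
`n`-th absolute moment `√(2π) (2π)ⁿ ∫ |ξ|ⁿ e^{-2π²ξ²} dξ = 2^{n/2} Γ((n+1)/2) / √π`. The
functional equation `Γ(s+1) = s Γ(s)` gives `2ⁿ Γ((n+1)/2)² ≤ π n!` by a two-step induction, so
`φ(u) |Hₙ(u)| ≤ √(n!) / √(2π) < √(n!)`, and `K = 1` works.
-/

open MeasureTheory Real Set FourierTransform
open scoped Nat

theorem Real.two_pow_mul_Gamma_sq_le (n : ℕ) :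
    2 ^ n * Gamma ((n + 1) / 2) ^ 2 ≤ π * n ! := by
  induction n using Nat.twoStepInduction with
  | zero =>
    simp only [CharP.cast_eq_zero, zero_add, pow_zero, one_mul, Nat.factorial_zero, Nat.cast_one,
      mul_one, Gamma_one_half_eq, sq_sqrt pi_pos.le, le_refl]
  | one => simpa using two_le_pi
  | more n ih _ =>
    have hGamma : Gamma ((((n + 2 : ℕ) : ℝ) + 1) / 2) = (n + 1) / 2 * Gamma ((n + 1) / 2) := by
      rw [← Gamma_add_one (by positivity)]; congr 1; push_cast; ring
    have hfac : ((n + 2)! : ℝ) = (n + 2) * (n + 1) * n ! := by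
      push_cast [Nat.factorial_succ]; ring
    rw [hGamma, hfac]
    calc 2 ^ (n + 2) * ((n + 1) / 2 * Gamma ((n + 1) / 2)) ^ 2
        = (n + 1) ^ 2 * (2 ^ n * Gamma ((n + 1) / 2) ^ 2) := by ring
      _ ≤ (n + 1) ^ 2 * (π * n !) := by gcongr
      _ ≤ π * ((n + 2) * (n + 1) * n !) := by
        have : 0 ≤ π * n ! := by positivity
        nlinarith

theorem integral_abs_pow_mul_exp_neg_mul_sq {b : ℝ} (hb : 0 < b) (n : ℕ) :
    ∫ x, |x| ^ n * exp (-b * x ^ 2) = b ^ (-((n : ℝ) + 1) / 2) * Gamma ((n + 1) / 2) := by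
  have hhalf : ∫ x in Ioi (0 : ℝ), x ^ n * exp (-b * x ^ 2)
      = b ^ (-((n : ℝ) + 1) / 2) * (1 / 2) * Gamma ((n + 1) / 2) := by
    rw [← integral_rpow_mul_exp_neg_mul_rpow two_pos
      (neg_one_lt_zero.trans_le n.cast_nonneg) hb]
    refine setIntegral_congr_fun measurableSet_Ioi fun x _ => ?_
    simp only [rpow_natCast, rpow_two]
  calc ∫ x, |x| ^ n * exp (-b * x ^ 2) = ∫ x, |x| ^ n * exp (-b * |x| ^ 2) := by
        simp_rw [sq_abs]
    _ = 2 * ∫ x in Ioi (0 : ℝ), x ^ n * exp (-b * x ^ 2) :=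
      integral_comp_abs (f := fun x => x ^ n * exp (-b * x ^ 2))
    _ = _ := by rw [hhalf]; ring

theorem sq_integral_abs_pow_mul_exp_neg_mul_sq_le {b : ℝ} (hb : 0 < b) (n : ℕ) :
    (2 * b) ^ n * (∫ x, |x| ^ n * exp (-b * x ^ 2)) ^ 2 ≤ π / b * n ! := by
  have hpow : (b ^ (-((n : ℝ) + 1) / 2)) ^ 2 = (b ^ (n + 1))⁻¹ := by
    rw [← rpow_natCast, ← rpow_mul hb.le, ← rpow_natCast, ← rpow_neg hb.le]
    push_cast; ring_nf
  rw [integral_abs_pow_mul_exp_neg_mul_sq hb]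
  calc (2 * b) ^ n * (b ^ (-((n : ℝ) + 1) / 2) * Gamma ((n + 1) / 2)) ^ 2
      = (2 ^ n * Gamma ((n + 1) / 2) ^ 2) / b := by rw [mul_pow _ (Gamma _), hpow]; field_simp; ring
    _ ≤ π * n ! / b := div_le_div_of_nonneg_right (two_pow_mul_Gamma_sq_le n) hb.le
    _ = π / b * n ! := by ring

theorem Real.norm_iteratedDeriv_fourier_le {g : ℝ → ℂ} {n : ℕ}
    (hg : ∀ k ≤ n, Integrable (fun ξ : ℝ => ξ ^ k • g ξ)) (x : ℝ) :
    ‖iteratedDeriv n (𝓕 g) x‖ ≤ (2 * π) ^ n * ∫ ξ, |ξ| ^ n * ‖g ξ‖ := by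
  rw [iteratedDeriv_fourier (N := n) (fun k hk => hg k (mod_cast hk)) le_rfl,
    ← integral_const_mul]
  refine (VectorFourier.norm_fourierIntegral_le_integral_norm _ _ _ _ _).trans_eq ?_
  congr 1 with ξ
  simp only [smul_eq_mul, Complex.norm_mul, norm_pow, norm_neg, Complex.norm_ofNat,
    Complex.norm_real, norm_eq_abs, abs_of_pos pi_pos, Complex.norm_I, mul_pow]
  ring

theorem fourier_sqrt_two_pi_mul_gaussian :
    𝓕 (fun ξ : ℝ => ((√(2 * π) * rexp (-(2 * π ^ 2) * ξ ^ 2) : ℝ) : ℂ))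
      = fun x => ((rexp (-(x ^ 2 / 2)) : ℝ) : ℂ) := by
  have h2π : (0 : ℝ) < (((2 * π : ℝ) : ℂ)).re := by simpa using two_pi_pos
  have hsqrt : (((2 * π : ℝ) : ℂ)) ^ (1 / 2 : ℂ) = ((√(2 * π) : ℝ) : ℂ) := by
    rw [sqrt_eq_rpow, Complex.ofReal_cpow two_pi_pos.le]; norm_num
  have hg : (fun ξ : ℝ => ((√(2 * π) * rexp (-(2 * π ^ 2) * ξ ^ 2) : ℝ) : ℂ)) =
      ((√(2 * π) : ℝ) : ℂ) • fun ξ : ℝ => Complex.exp (-π * ((2 * π : ℝ) : ℂ) * ξ ^ 2) := by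
    ext ξ; simp only [Pi.smul_apply, smul_eq_mul]; push_cast; ring_nf
  have hlin : ∀ (c : ℂ) (f : ℝ → ℂ), 𝓕 (c • f) = c • 𝓕 f := fun c f =>
    VectorFourier.fourierIntegral_const_smul _ _ _ _ _
  rw [hg, hlin, fourier_gaussian_pi h2π, hsqrt]
  ext x
  have : ((√(2 * π) : ℝ) : ℂ) ≠ 0 :=
    Complex.ofReal_ne_zero.mpr (sqrt_pos.mpr two_pi_pos).ne'
  simp only [Pi.smul_apply, smul_eq_mul]
  push_cast
  field_simp

theorem abs_iteratedDeriv_eq_norm_iteratedDeriv_ofReal {f : ℝ → ℝ} {n : ℕ} {x : ℝ}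
    (hf : ContDiffAt ℝ n f x) :
    |iteratedDeriv n f x| = ‖iteratedDeriv n (fun y => (f y : ℂ)) x‖ := by
  simp only [← Real.norm_eq_abs, ← norm_iteratedFDeriv_eq_norm_iteratedDeriv]
  exact (Complex.ofRealLI.norm_iteratedFDeriv_comp_left hf le_rfl).symm

theorem abs_iteratedDeriv_gaussian_le (n : ℕ) (x : ℝ) :
    |iteratedDeriv n (fun y => rexp (-(y ^ 2 / 2))) x|
      ≤ √(2 * π) * ((2 * π) ^ n * ∫ ξ, |ξ| ^ n * rexp (-(2 * π ^ 2) * ξ ^ 2)) := by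
  set g : ℝ → ℂ := fun ξ => ((√(2 * π) * rexp (-(2 * π ^ 2) * ξ ^ 2) : ℝ) : ℂ)
  have hg : ∀ k, Integrable (fun ξ : ℝ => ξ ^ k • g ξ) := fun k => by
    have := ((integrable_rpow_mul_exp_neg_mul_sq (by positivity : (0 : ℝ) < 2 * π ^ 2)
      (neg_one_lt_zero.trans_le k.cast_nonneg)).const_mul √(2 * π)).ofReal (𝕜 := ℂ)
    refine this.congr (.of_forall fun ξ => ?_)
    simp only [g, rpow_natCast, Complex.coe_algebraMap, Complex.ofReal_mul, Complex.ofReal_pow,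
      Complex.real_smul]
    ring
  have hnorm : ∀ ξ, ‖g ξ‖ = √(2 * π) * rexp (-(2 * π ^ 2) * ξ ^ 2) := fun ξ => by
    simp only [g, Complex.norm_real, Real.norm_eq_abs]
    exact abs_of_pos (by positivity)
  rw [abs_iteratedDeriv_eq_norm_iteratedDeriv_ofReal (by fun_prop),
    ← fourier_sqrt_two_pi_mul_gaussian]
  refine (Real.norm_iteratedDeriv_fourier_le (fun k _ => hg k) x).trans_eq ?_
  simp only [hnorm, mul_left_comm _ √(2 * π), integral_const_mul]

theorem abs_iteratedDeriv_gaussian_le_sqrt_factorial (n : ℕ) (x : ℝ) :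
    |iteratedDeriv n (fun y => rexp (-(y ^ 2 / 2))) x| ≤ √(n ! : ℝ) := by
  refine (abs_iteratedDeriv_gaussian_le n x).trans ?_
  set M := ∫ ξ, |ξ| ^ n * rexp (-(2 * π ^ 2) * ξ ^ 2)
  have hM : 0 ≤ M := integral_nonneg fun ξ => by positivity
  rw [Real.le_sqrt (by positivity) (by positivity)]
  calc (√(2 * π) * ((2 * π) ^ n * M)) ^ 2 = 2 * π * ((2 * (2 * π ^ 2)) ^ n * M ^ 2) := by
        rw [mul_pow, mul_pow, sq_sqrt two_pi_pos.le, ← pow_mul, mul_comm n 2, pow_mul]; ring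
    _ ≤ 2 * π * (π / (2 * π ^ 2) * n !) := mul_le_mul_of_nonneg_left
        (sq_integral_abs_pow_mul_exp_neg_mul_sq_le (by positivity) n) two_pi_pos.le
    _ = n ! := by field_simp

theorem hermite_uniform_bound :
    ∃ K : ℝ, 0 < K ∧ ∀ (u : ℝ) (n : ℕ),
      gaussDensity u * |hermiteEval n u| / Real.sqrt (n.factorial) < K := by
  refine ⟨1, one_pos, fun u n => ?_⟩
  have hdensity : gaussDensity u * |hermiteEval n u|
      = |deriv^[n] (fun y => rexp (-(y ^ 2 / 2))) u| / √(2 * π) := by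
    rw [Polynomial.deriv_gaussian_eq_hermite_mul_gaussian, gaussDensity, hermiteEval, abs_mul,
      abs_mul, abs_pow, abs_neg, abs_one, one_pow, one_mul, abs_of_pos (exp_pos _), neg_div]
    ring
  have hfac : 0 < √(n ! : ℝ) := by positivity
  have hsqrt : 1 < √(2 * π) := by
    rw [Real.lt_sqrt zero_le_one]; linarith [pi_gt_three]
  rw [div_lt_one hfac, hdensity, ← iteratedDeriv_eq_iterate, div_lt_iff₀ (by positivity)]
  exact (abs_iteratedDeriv_gaussian_le_sqrt_factorial n u).trans_lt
    (lt_mul_of_one_lt_right hfac hsqrt)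
end

section
/- For every integer p ≥ 2, Σ_{r=0}^{p−2} (r!)² C(p−1,r)⁴ (2p−2−2r)! ≤ 9^{p−1} ((p−1)!)², where C(p−1,r) denotes the binomial coefficient. Equivalently, Σ_{r=0}^{p−2} C(p−1,r)² C(2p−2−2r, p−1−r) ≤ 9^{p−1}. -/
/-!
With `n = p - 1`, both sums reduce to `∑ C(n,r)² · C(2(n-r), n-r)` over `r < n`.
Bounding the central binomial coefficient by `4^(n-r) = (2^(n-r))²` makes each term the square of
`C(n,r) · 2^(n-r)`, and a sum of nonnegative squares is at most the square of the sum, which is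
`3^n` by the binomial theorem.
-/

open Finset Nat

theorem factorial_sq_mul_choose_pow_four_mul_factorial {n r : ℕ} (hr : r ≤ n) :
    r ! ^ 2 * n.choose r ^ 4 * (2 * (n - r))! =
      n ! ^ 2 * (n.choose r ^ 2 * centralBinom (n - r)) := by
  have hn : n.choose r * r ! * (n - r)! = n ! := choose_mul_factorial_mul_factorial hr
  have hc : centralBinom (n - r) * (n - r)! * (n - r)! = (2 * (n - r))! := by
    have h := choose_mul_factorial_mul_factorial (n := 2 * (n - r)) (k := n - r) (by omega)
    rwa [show 2 * (n - r) - (n - r) = n - r by omega, ← centralBinom_eq_two_mul_choose] at h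
  rw [← hn, ← hc]
  ring

theorem sum_choose_mul_two_pow (n : ℕ) :
    ∑ r ∈ range (n + 1), n.choose r * 2 ^ (n - r) = 3 ^ n := by
  rw [show 3 = 1 + 2 from rfl, add_pow]
  exact sum_congr rfl fun r _ ↦ by rw [one_pow, one_mul, Nat.cast_id, mul_comm]

theorem sum_choose_sq_mul_centralBinom_le (n : ℕ) :
    ∑ r ∈ range (n + 1), n.choose r ^ 2 * centralBinom (n - r) ≤ 9 ^ n :=
  calc ∑ r ∈ range (n + 1), n.choose r ^ 2 * centralBinom (n - r)
      ≤ ∑ r ∈ range (n + 1), (n.choose r * 2 ^ (n - r)) ^ 2 := by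
        refine sum_le_sum fun r _ ↦ ?_
        rw [mul_pow, ← pow_mul, mul_comm (n - r) 2, pow_mul]
        exact Nat.mul_le_mul_left _ (centralBinom_le_four_pow _)
    _ ≤ (∑ r ∈ range (n + 1), n.choose r * 2 ^ (n - r)) ^ 2 :=
        sum_sq_le_sq_sum_of_nonneg fun _ _ ↦ Nat.zero_le _
    _ = 9 ^ n := by rw [sum_choose_mul_two_pow, ← pow_mul, mul_comm, pow_mul]; norm_num

theorem combinatorial_sum_bound_general (p : ℕ) :
    (∑ r ∈ Finset.range (p - 1), ((r.factorial : ℝ)) ^ 2 * ((p - 1).choose r : ℝ) ^ 4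
        * ((2 * p - 2 - 2 * r).factorial : ℝ))
      ≤ 9 ^ (p - 1) * ((p - 1).factorial : ℝ) ^ 2 ∧
    (∑ r ∈ Finset.range (p - 1),
        ((p - 1).choose r : ℝ) ^ 2 * ((2 * p - 2 - 2 * r).choose (p - 1 - r) : ℝ))
      ≤ 9 ^ (p - 1) := by
  have harg : ∀ r ∈ range (p - 1), 2 * p - 2 - 2 * r = 2 * (p - 1 - r) := by
    intro r hr
    rw [mem_range] at hr
    omega
  have hbound : ∑ r ∈ range (p - 1), (p - 1).choose r ^ 2 * centralBinom (p - 1 - r)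
      ≤ 9 ^ (p - 1) :=
    (sum_le_sum_of_subset (range_subset_range.2 (p - 1).le_succ)).trans
      (sum_choose_sq_mul_centralBinom_le (p - 1))
  have hterms : ∑ r ∈ range (p - 1), r ! ^ 2 * (p - 1).choose r ^ 4 * (2 * p - 2 - 2 * r)!
      = (p - 1)! ^ 2 * ∑ r ∈ range (p - 1), (p - 1).choose r ^ 2 * centralBinom (p - 1 - r) := by
    rw [mul_sum]
    refine sum_congr rfl fun r hr ↦ ?_
    rw [harg r hr, factorial_sq_mul_choose_pow_four_mul_factorial (mem_range.1 hr).le]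
  have hcentral :
      ∑ r ∈ range (p - 1), (p - 1).choose r ^ 2 * (2 * p - 2 - 2 * r).choose (p - 1 - r)
        = ∑ r ∈ range (p - 1), (p - 1).choose r ^ 2 * centralBinom (p - 1 - r) :=
    sum_congr rfl fun r hr ↦ by rw [harg r hr, centralBinom_eq_two_mul_choose]
  constructor
  · have h := Nat.mul_le_mul_left ((p - 1)! ^ 2) hbound
    rw [← hterms, mul_comm ((p - 1)! ^ 2)] at h
    exact_mod_cast h
  · exact_mod_cast hcentral ▸ hbound

theorem combinatorial_sum_bound (p : ℕ) (hp : 2 ≤ p) :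
    (∑ r ∈ Finset.range (p - 1), ((r.factorial : ℝ)) ^ 2 * ((p - 1).choose r : ℝ) ^ 4
        * ((2 * p - 2 - 2 * r).factorial : ℝ))
      ≤ 9 ^ (p - 1) * ((p - 1).factorial : ℝ) ^ 2 ∧
    (∑ r ∈ Finset.range (p - 1),
        ((p - 1).choose r : ℝ) ^ 2 * ((2 * p - 2 - 2 * r).choose (p - 1 - r) : ℝ))
      ≤ 9 ^ (p - 1) :=
  combinatorial_sum_bound_general p
end
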